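/- Let M and M' be two popular matchings of a CHA instance I, with switching graphs G_M and G_{M'}, and let S be the set of edges of G_M whose direction is reversed in G_{M'}. Then every directed cycle contained in S is a switching cycle of G_M, i.e., an even-length directed cycle whose edge weights alternate between +1 and −1. -/

import Mathlib

/-- A Capacitated House Allocation (CHA) instance: agents `A`, houses `H`, a capacity
function `cap : H → ℤ_{>0}`, and for each agent a strict preference order (lower rank
means more preferred) over its adjacent houses, augmented with a unique last-resort
house `l(a)` of capacity `1` and lowest preference, appearing only on `a`'s list. -/
structure CHAInstance (A H : Type*) where
  adj : A → H → Prop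
  rank : A → H → ℕ
  rank_strict : ∀ a h h', adj a h → adj a h' → rank a h = rank a h' → h = h'
  cap : H → ℕ
  cap_pos : ∀ h, 0 < cap h
  lastResort : A → H
  lastResort_injective : Function.Injective lastResort
  lastResort_adj : ∀ a, adj a (lastResort a)
  lastResort_worst : ∀ a h, adj a h → h ≠ lastResort a → rank a h < rank a (lastResort a)
  lastResort_only : ∀ a a', adj a' (lastResort a) → a' = a
  lastResort_cap : ∀ a, cap (lastResort a) = 1

namespace CHAInstance

variable {A H : Type*}

/-- A matching of the CHA instance `I`: each agent is matched to at most one adjacent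
house, and each house `h` is matched to at most `cap h` agents. -/
def IsMatching (I : CHAInstance A H) (M : Set (A × H)) : Prop :=
  (∀ p ∈ M, I.adj p.1 p.2) ∧ (∀ p ∈ M, ∀ q ∈ M, p.1 = q.1 → p = q) ∧
    (∀ h : H, {a | (a, h) ∈ M}.ncard ≤ I.cap h)

/-- Agent `a` prefers matching `M` to matching `M'`: `a` is matched in `M` and either
unmatched in `M'`, or strictly prefers its house in `M` to its house in `M'`. -/
def Prefers (I : CHAInstance A H) (M M' : Set (A × H)) (a : A) : Prop :=
  ∃ h, (a, h) ∈ M ∧ ∀ h', (a, h') ∈ M' → I.rank a h < I.rank a h'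

/-- `M` is more popular than `M'`. -/
def MorePopular [Fintype A] (I : CHAInstance A H) (M M' : Set (A × H)) : Prop :=
  Nat.card {a | Prefers I M M' a} > Nat.card {a | Prefers I M' M a}

/-- `M` is a popular matching of `I`. -/
def IsPopular [Fintype A] (I : CHAInstance A H) (M : Set (A × H)) : Prop :=
  I.IsMatching M ∧ ∀ M', I.IsMatching M' → ¬ MorePopular I M' M

/-- `h = f(a)`: house `h` is the (unique) first choice of agent `a`. -/
def IsFirstChoice (I : CHAInstance A H) (a : A) (h : H) : Prop :=
  I.adj a h ∧ ∀ h', I.adj a h' → I.rank a h ≤ I.rank a h'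

/-- `f(h)`: the set of agents whose first choice is `h`. -/
def fSet (I : CHAInstance A H) (h : H) : Set A := {a | IsFirstChoice I a h}

/-- `h` is an `f`-house if it is the first choice of some agent. -/
def IsFHouse (I : CHAInstance A H) (h : H) : Prop := ∃ a, IsFirstChoice I a h

/-- The defining condition for `s(a)`: `h` is not an `f`-house, or `h` is an `f`-house
with `h ≠ f(a)` and `|f(h)| < c(h)`. -/
def SCond (I : CHAInstance A H) (a : A) (h : H) : Prop :=
  ¬ IsFHouse I h ∨ (¬ IsFirstChoice I a h ∧ (fSet I h).ncard < I.cap h)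

/-- `h = s(a)`: house `h` is the highest-ranked house on `a`'s preference list
satisfying `SCond`. -/
def IsSecondChoice (I : CHAInstance A H) (a : A) (h : H) : Prop :=
  I.adj a h ∧ SCond I a h ∧ ∀ h', I.adj a h' → SCond I a h' → I.rank a h ≤ I.rank a h'

/-- The switching graph `G_M` of `I` with respect to a popular matching `M`:
`SwEdge I M a src tgt w` says that agent `a` contributes the directed edge from
`src = M(a)` to `tgt`, the other element of `{f(a), s(a)}`, with weight
`w = -1` if `M(a) = f(a)` and `w = +1` otherwise. -/
def SwEdge (I : CHAInstance A H) (M : Set (A × H)) (a : A) (src tgt : H) (w : ℤ) :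
    Prop :=
  (a, src) ∈ M ∧
    ((IsFirstChoice I a src ∧ IsSecondChoice I a tgt ∧ w = -1) ∨
     (IsSecondChoice I a src ∧ IsFirstChoice I a tgt ∧ w = 1))

/-- The unsaturation degree `u_M(h) = c(h) - |M(h)|` of a house `h`. -/
noncomputable def unsatDeg (I : CHAInstance A H) (M : Set (A × H)) (h : H) : ℕ :=
  I.cap h - {a | (a, h) ∈ M}.ncard

/-- A house is saturated if its unsaturation degree is `0`. -/
def Saturated (I : CHAInstance A H) (M : Set (A × H)) (h : H) : Prop :=
  unsatDeg I M h = 0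

end CHAInstance

/-- A directed weighted edge of a switching graph, labelled by the agent that
contributes it. -/
structure DirEdge (A H : Type*) where
  agent : A
  src : H
  tgt : H
  wt : ℤ

namespace CHAInstance

variable {A H : Type*}

/-- `e` is an edge of the switching graph `G_M`. -/
def ValidEdge (I : CHAInstance A H) (M : Set (A × H)) (e : DirEdge A H) : Prop :=
  SwEdge I M e.agent e.src e.tgt e.wt

/-- Consecutive edges of the list are head-to-tail. -/
def ChainOK (l : List (DirEdge A H)) : Prop :=
  ∀ (i : ℕ) (h : i + 1 < l.length),
    (l.get ⟨i, Nat.lt_of_succ_lt h⟩).tgt = (l.get ⟨i + 1, h⟩).src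

/-- Consecutive edges of the list have alternating (opposite) weights. -/
def AltWt (l : List (DirEdge A H)) : Prop :=
  ∀ (i : ℕ) (h : i + 1 < l.length),
    (l.get ⟨i + 1, h⟩).wt = -(l.get ⟨i, Nat.lt_of_succ_lt h⟩).wt

/-- The list of vertices visited by a list of head-to-tail edges. -/
def PathVerts (l : List (DirEdge A H)) : List H :=
  l.map (·.src) ++ (l.getLast?.map (·.tgt)).toList

/-- A (nonempty) directed path in the switching graph `G_M`: head-to-tail edges of
`G_M` visiting pairwise distinct vertices. -/
def IsDirPath (I : CHAInstance A H) (M : Set (A × H)) (l : List (DirEdge A H)) : Prop :=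
  l ≠ [] ∧ (∀ e ∈ l, ValidEdge I M e) ∧ ChainOK l ∧ (PathVerts l).Nodup

/-- An alternating path of `G_M`: a directed path that starts with a `+1` edge, ends
with a `-1` edge, and alternates between `+1` and `-1` edges. -/
def IsAlternatingPath (I : CHAInstance A H) (M : Set (A × H))
    (l : List (DirEdge A H)) : Prop :=
  IsDirPath I M l ∧ AltWt l ∧
    (∀ e, l.head? = some e → e.wt = 1) ∧ (∀ e, l.getLast? = some e → e.wt = -1)

/-- A switching path of `G_M`: an alternating path ending at an unsaturated vertex. -/
def IsSwitchingPath (I : CHAInstance A H) (M : Set (A × H))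
    (l : List (DirEdge A H)) : Prop :=
  IsAlternatingPath I M l ∧ ∀ e, l.getLast? = some e → 0 < unsatDeg I M e.tgt

/-- A directed cycle in the switching graph `G_M`: head-to-tail edges of `G_M`, closing
up cyclically, visiting pairwise distinct vertices. -/
def IsDirCycle (I : CHAInstance A H) (M : Set (A × H)) (l : List (DirEdge A H)) : Prop :=
  l ≠ [] ∧ (∀ e ∈ l, ValidEdge I M e) ∧ ChainOK l ∧
    (∀ e f, l.getLast? = some e → l.head? = some f → e.tgt = f.src) ∧
    (l.map (·.src)).Nodup

/-- A switching cycle of `G_M`: an even-length directed cycle whose edge weights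
alternate (cyclically) between `-1` and `+1`. -/
def IsSwitchingCycle (I : CHAInstance A H) (M : Set (A × H))
    (l : List (DirEdge A H)) : Prop :=
  IsDirCycle I M l ∧ Even l.length ∧ AltWt l ∧
    (∀ e f, l.getLast? = some e → l.head? = some f → f.wt = -e.wt)

open scoped Classical in
/-- A switching set of `G_M`, given as a finite list of pieces: each piece is a
switching path or a switching cycle, the pieces are pairwise edge-disjoint, and at most
`k` of the switching paths end at any vertex of unsaturation degree `k`. -/
noncomputable def IsSwitchingSet (I : CHAInstance A H) (M : Set (A × H))
    (S : List (List (DirEdge A H))) : Prop :=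
  (∀ l ∈ S, IsSwitchingPath I M l ∨ IsSwitchingCycle I M l) ∧
    S.Pairwise (fun l₁ l₂ => ∀ e ∈ l₁, e ∉ l₂) ∧
    ∀ h : H,
      (S.countP (fun l => decide (IsSwitchingPath I M l ∧
        ∃ e, l.getLast? = some e ∧ e.tgt = h))) ≤ unsatDeg I M h

/-- The set of edges of `G_M` that are reversed (with flipped weight) in `G_{M'}`. -/
def ReversedEdges (I : CHAInstance A H) (M M' : Set (A × H)) : Set (DirEdge A H) :=
  {e | ValidEdge I M e ∧ SwEdge I M' e.agent e.tgt e.src (-e.wt)}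

/-- The matching obtained from `M` by the switching move along the switching set `S`:
every agent whose edge lies in `S` is reassigned from the source to the target of its
edge; all other agents keep their assignment. -/
def SwitchingMove (M : Set (A × H)) (S : List (List (DirEdge A H))) : Set (A × H) :=
  (M \ {p | ∃ l ∈ S, ∃ e ∈ l, p = (e.agent, e.src)}) ∪
    {p | ∃ l ∈ S, ∃ e ∈ l, p = (e.agent, e.tgt)}

end CHAInstance

/-!
Two consecutive `+1` edges `x → h → y` of `G_N` (agent `a` holds `x = s(a)` with `f(a) = h`,
agent `b` holds `h = s(b)` with `f(b) = y`) contradict the popularity of `N`: promoting `a` to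
`h` and `b` to `y`, and if `y` is full sending one of its other occupants to its last resort,
gives a matching that two agents prefer and at most one agent dislikes. For an edge reversed in
`G_{M'}` the weight flips, so two consecutive reversed edges of equal weight would be two
consecutive `+1` edges of `G_M` or of `G_{M'}`. Hence weights alternate along a cycle in `S`,
which then has even length since all weights are `±1`.
-/

namespace CHAInstance

variable {A H : Type*} {I : CHAInstance A H} {N : Set (A × H)} {a b d : A} {h h' x y : H}

lemma IsFirstChoice.rank_lt (hf : IsFirstChoice I a h) (hadj : I.adj a h') (hne : h ≠ h') :
    I.rank a h < I.rank a h' :=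
  (hf.2 h' hadj).lt_of_ne fun e => hne (I.rank_strict a h h' hf.1 hadj e)

lemma IsFirstChoice.ne_of_isSecondChoice (hf : IsFirstChoice I a h) (hs : IsSecondChoice I a h') :
    h ≠ h' := by
  rintro rfl
  rcases hs.2.1 with hnf | ⟨hnf, -⟩
  exacts [hnf ⟨a, hf⟩, hnf hf]

lemma IsMatching.eq_of_mem (hN : IsMatching I N) (h₁ : (a, h) ∈ N) (h₂ : (a, h') ∈ N) :
    h = h' :=
  congrArg Prod.snd (hN.2.1 _ h₁ _ h₂ rfl)

lemma Prefers.not_prefers {N' : Set (A × H)} (hp : Prefers I N N' a) : ¬ Prefers I N' N a := by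
  rintro ⟨h', hN', hlt'⟩
  obtain ⟨h, hN, hlt⟩ := hp
  exact lt_asymm (hlt h' hN') (hlt' h hN)

lemma SwEdge.wt_eq_neg_one_or_one {w : ℤ} (he : SwEdge I N a x y w) : w = -1 ∨ w = 1 := by
  rcases he.2 with ⟨-, -, hw⟩ | ⟨-, -, hw⟩
  exacts [Or.inl hw, Or.inr hw]

lemma SwEdge.isSecondChoice_isFirstChoice (he : SwEdge I N a x y 1) :
    IsSecondChoice I a x ∧ IsFirstChoice I a y := by
  rcases he.2 with ⟨-, -, hw⟩ | ⟨hs, hf, -⟩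
  · norm_num at hw
  · exact ⟨hs, hf⟩

lemma even_length_of_altWt {l : List (DirEdge A H)} (halt : AltWt l)
    (hwrap : ∀ e f, l.getLast? = some e → l.head? = some f → f.wt = -e.wt)
    (hwt : ∀ e ∈ l, e.wt ≠ 0) : Even l.length := by
  by_contra hodd
  obtain ⟨n, hn⟩ := Nat.not_even_iff_odd.1 hodd
  have hpow : ∀ i (hi : i < l.length), l[i].wt = (-1 : ℤ) ^ i * l[0].wt := by
    intro i hi
    induction i with
    | zero => simp
    | succ k ih =>
      rw [show l[k + 1].wt = -l[k].wt from halt k hi, ih (by omega), pow_succ]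
      ring
  have hlast : l[2 * n].wt = l[0].wt := by
    rw [hpow _ (by omega), (even_two_mul n).neg_one_pow, one_mul]
  have hfirst := hwrap l[2 * n] l[0] (by simp [List.getLast?_eq_getElem?, hn])
    (by simp [List.head?_eq_getElem?])
  exact hwt l[0] (List.getElem_mem _) (by omega)

section Reassign

def reassign (N : Set (A × H)) (S : Set A) (g : A → H) : Set (A × H) :=
  {p | p.1 ∈ S ∧ p.2 = g p.1 ∨ p.1 ∉ S ∧ p ∈ N}

variable {S : Set A} {g : A → H}

lemma mem_reassign_of_mem (hd : d ∈ S) : (d, g d) ∈ reassign N S g :=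
  Or.inl ⟨hd, rfl⟩

lemma mem_reassign_iff_of_notMem (hd : d ∉ S) : (d, h) ∈ reassign N S g ↔ (d, h) ∈ N := by
  simp [reassign, hd]

lemma mem_of_prefers_reassign (hp : Prefers I N (reassign N S g) d) : d ∈ S := by
  by_contra hd
  obtain ⟨h, hN, hlt⟩ := hp
  exact lt_irrefl _ (hlt h ((mem_reassign_iff_of_notMem hd).2 hN))

lemma mem_of_reassign_prefers (hp : Prefers I (reassign N S g) N d) : d ∈ S := by
  by_contra hd
  obtain ⟨h, hN, hlt⟩ := hp
  exact lt_irrefl _ (hlt h ((mem_reassign_iff_of_notMem hd).1 hN))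

lemma prefers_reassign_of_rank_lt (hN : IsMatching I N) (ha : (a, h) ∈ N) (haS : a ∈ S)
    (hlt : I.rank a (g a) < I.rank a h) : Prefers I (reassign N S g) N a :=
  ⟨g a, mem_reassign_of_mem haS, fun _ hh' => hN.eq_of_mem ha hh' ▸ hlt⟩

lemma IsMatching.reassign [Finite A] (hN : IsMatching I N) (hadj : ∀ d ∈ S, I.adj d (g d))
    (hinj : S.InjOn g) (hroom : ∀ d ∈ S, ({e | (e, g d) ∈ N} \ S).ncard < I.cap (g d)) :
    IsMatching I (reassign N S g) := by
  refine ⟨?_, ?_, fun h₀ => ?_⟩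
  · rintro ⟨d, h⟩ (⟨hd, hh : h = g d⟩ | ⟨-, hdN⟩)
    exacts [hh ▸ hadj d hd, hN.1 _ hdN]
  · rintro ⟨d, h⟩ hp ⟨d', h'⟩ hq (rfl : d = d')
    rcases hp with ⟨hd, hh : h = g d⟩ | ⟨hd, hp⟩ <;>
      rcases hq with ⟨hd', hh' : h' = g d⟩ | ⟨hd', hq⟩
    · rw [hh, hh']
    · exact absurd hd hd'
    · exact absurd hd' hd
    · exact hN.2.1 _ hp _ hq rfl
  · by_cases himg : h₀ ∈ g '' S
    · obtain ⟨d, hd, rfl⟩ := himg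
      have hsub : {e | (e, g d) ∈ CHAInstance.reassign N S g} ⊆
          insert d ({e | (e, g d) ∈ N} \ S) := by
        rintro e (⟨he, hge⟩ | ⟨he, heN⟩)
        exacts [Or.inl (hinj he hd hge.symm), Or.inr ⟨heN, he⟩]
      calc _ ≤ (insert d ({e | (e, g d) ∈ N} \ S)).ncard := Set.ncard_le_ncard hsub
        _ ≤ ({e | (e, g d) ∈ N} \ S).ncard + 1 := Set.ncard_insert_le _ _
        _ ≤ I.cap (g d) := hroom d hd
    · refine (Set.ncard_le_ncard ?_).trans (hN.2.2 h₀)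
      rintro e (⟨he, hge : h₀ = g e⟩ | ⟨-, heN⟩)
      exacts [absurd ⟨e, he, hge.symm⟩ himg, heN]

lemma morePopular_reassign [Fintype A] (hS : S.ncard ≤ 3) (hab : a ≠ b)
    (ha : Prefers I (reassign N S g) N a) (hb : Prefers I (reassign N S g) N b) :
    MorePopular I (reassign N S g) N := by
  have hwin : 2 ≤ {d | Prefers I (reassign N S g) N d}.ncard :=
    Set.ncard_pair hab ▸ Set.ncard_le_ncard (Set.pair_subset ha hb)
  have htotal : {d | Prefers I N (reassign N S g) d}.ncard +
      {d | Prefers I (reassign N S g) N d}.ncard ≤ S.ncard := by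
    rw [← Set.ncard_union_eq (Set.disjoint_left.2 fun _ hd hd' => hd.not_prefers hd')]
    exact Set.ncard_le_ncard
      (Set.union_subset (fun _ => mem_of_prefers_reassign) (fun _ => mem_of_reassign_prefers))
  simp only [MorePopular, Nat.card_coe_set_eq]
  omega

end Reassign

lemma IsMatching.ncard_occupants_sdiff_lt [Finite A] (hN : IsMatching I N) {S : Set A}
    (hd : (d, h) ∈ N) (hdS : d ∈ S) : ({e | (e, h) ∈ N} \ S).ncard < I.cap h :=
  calc _ ≤ ({e | (e, h) ∈ N} \ {d}).ncard :=
        Set.ncard_le_ncard (Set.sdiff_subset_sdiff_right (Set.singleton_subset_iff.2 hdS))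
    _ < {e | (e, h) ∈ N}.ncard := Set.ncard_sdiff_singleton_lt_of_mem hd
    _ ≤ I.cap h := hN.2.2 h

lemma IsPopular.not_isFirstChoice_of_isSecondChoice [Fintype A] (hN : IsPopular I N)
    (ha : (a, h) ∈ N) (hsa : IsSecondChoice I a h) (hfa : IsFirstChoice I a x)
    (hb : (b, y) ∈ N) (hsb : IsSecondChoice I b y) : ¬ IsFirstChoice I b h := by
  classical
  intro hfb
  have hxh : x ≠ h := hfa.ne_of_isSecondChoice hsa
  have hab : a ≠ b := by rintro rfl; exact hfb.ne_of_isSecondChoice hsa rfl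
  let g : A → H := fun d => if d = a then x else if d = b then h else I.lastResort d
  have hga : g a = x := if_pos rfl
  have hgb : g b = h := by simp [g, hab.symm]
  have key : ∀ S : Set A, a ∈ S → b ∈ S → S.ncard ≤ 3 → S.InjOn g →
      ({e | (e, x) ∈ N} \ S).ncard < I.cap x →
      (∀ d ∈ S, d ≠ a → d ≠ b →
        I.adj d (g d) ∧ ({e | (e, g d) ∈ N} \ S).ncard < I.cap (g d)) → False := by
    intro S haS hbS hS hinj hroomx hother
    have hadj : ∀ d ∈ S, I.adj d (g d) := by
      intro d hd
      by_cases hda : d = a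
      · exact hda ▸ hga ▸ hfa.1
      by_cases hdb : d = b
      · exact hdb ▸ hgb ▸ hfb.1
      exact (hother d hd hda hdb).1
    have hroom : ∀ d ∈ S, ({e | (e, g d) ∈ N} \ S).ncard < I.cap (g d) := by
      intro d hd
      by_cases hda : d = a
      · exact hda ▸ hga ▸ hroomx
      by_cases hdb : d = b
      · exact hdb ▸ hgb ▸ hN.1.ncard_occupants_sdiff_lt ha haS
      exact (hother d hd hda hdb).2
    refine hN.2 _ (hN.1.reassign hadj hinj hroom) (morePopular_reassign hS hab ?_ ?_)
    · exact prefers_reassign_of_rank_lt hN.1 ha haS (hga ▸ hfa.rank_lt hsa.1 hxh)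
    · exact prefers_reassign_of_rank_lt hN.1 hb hbS
        (hgb ▸ hfb.rank_lt hsb.1 (hfb.ne_of_isSecondChoice hsb))
  by_cases hroomx : ({e | (e, x) ∈ N} \ {a, b}).ncard < I.cap x
  · refine key {a, b} (by simp) (by simp) (by rw [Set.ncard_pair hab]; norm_num) ?_ hroomx ?_
    · simp [hga, hgb, hxh, hab]
    · rintro d (rfl | rfl) hda hdb <;> contradiction
  -- `x` is full: one of its other occupants `c` is sent to its last resort
  obtain ⟨c, hcx, hcab⟩ : ({e | (e, x) ∈ N} \ {a, b}).Nonempty :=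
    Set.nonempty_of_ncard_ne_zero (by have := I.cap_pos x; omega)
  have hca : c ≠ a := fun e => hcab (Or.inl e)
  have hcb : c ≠ b := fun e => hcab (Or.inr e)
  have hgc : g c = I.lastResort c := by simp [g, hca, hcb]
  have hlc_x : I.lastResort c ≠ x := fun e => hca (I.lastResort_only c a (e ▸ hfa.1)).symm
  have hlc_h : I.lastResort c ≠ h := fun e => hca (I.lastResort_only c a (e ▸ hsa.1)).symm
  refine key {a, b, c} (by simp) (by simp) ?_ ?_ (hN.1.ncard_occupants_sdiff_lt hcx (by simp)) ?_
  · exact (Set.ncard_insert_le _ _).trans (by rw [Set.ncard_pair hcb.symm])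
  · rintro d (rfl | rfl | rfl) d' (rfl | rfl | rfl) hdd' <;> try rfl
    all_goals simp only [hga, hgb, hgc] at hdd'
    all_goals first | exact absurd hdd' ‹_› | exact absurd hdd'.symm ‹_›
  · rintro d (rfl | rfl | rfl) hda hdb
    iterate 2 contradiction
    refine ⟨hgc ▸ I.lastResort_adj d, ?_⟩
    have hfree : {e | (e, g d) ∈ N} \ {a, b, d} = ∅ := by
      refine Set.eq_empty_of_forall_notMem fun e ⟨he, heS⟩ => heS ?_
      exact Or.inr (Or.inr (I.lastResort_only d e (hgc ▸ hN.1.1 _ he)))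
    rw [hfree, Set.ncard_empty]
    exact I.cap_pos _

lemma IsPopular.not_swEdge_one_of_swEdge_one [Fintype A] (hN : IsPopular I N)
    (ha : SwEdge I N a x h 1) : ¬ SwEdge I N b h y 1 := by
  intro hb
  obtain ⟨hsa, hfa⟩ := ha.isSecondChoice_isFirstChoice
  obtain ⟨hsb, hfb⟩ := hb.isSecondChoice_isFirstChoice
  exact hN.not_isFirstChoice_of_isSecondChoice hb.1 hsb hfb ha.1 hsa hfa

lemma wt_neg_of_mem_reversedEdges [Fintype A] {M M' : Set (A × H)} (hM : IsPopular I M)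
    (hM' : IsPopular I M') {e f : DirEdge A H} (he : e ∈ ReversedEdges I M M')
    (hf : f ∈ ReversedEdges I M M') (hef : e.tgt = f.src) : f.wt = -e.wt := by
  obtain ⟨heM, heM'⟩ := he
  obtain ⟨hfM, hfM'⟩ := hf
  rcases heM.wt_eq_neg_one_or_one with he1 | he1 <;>
    rcases hfM.wt_eq_neg_one_or_one with hf1 | hf1
  · rw [he1, neg_neg, hef] at heM'
    rw [hf1, neg_neg] at hfM'
    exact absurd heM' (hM'.not_swEdge_one_of_swEdge_one hfM')
  · omega
  · omega
  · rw [ValidEdge, he1, hef] at heM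
    rw [ValidEdge, hf1] at hfM
    exact absurd hfM (hM.not_swEdge_one_of_swEdge_one heM)

end CHAInstance

open CHAInstance in
theorem dirCycle_in_reversedEdges_isSwitchingCycle_general
    {A H : Type*} [Fintype A] (I : CHAInstance A H)
    (M M' : Set (A × H)) (hM : IsPopular I M) (hM' : IsPopular I M')
    (l : List (DirEdge A H)) (hl : IsDirCycle I M l)
    (hsub : ∀ e ∈ l, e ∈ ReversedEdges I M M') :
    IsSwitchingCycle I M l := by
  obtain ⟨hne, hvalid, hchain, hclose, hnodup⟩ := hl
  have hneg : ∀ e ∈ l, ∀ f ∈ l, e.tgt = f.src → f.wt = -e.wt := fun e he f hf =>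
    wt_neg_of_mem_reversedEdges hM hM' (hsub e he) (hsub f hf)
  have halt : AltWt l := fun i hi =>
    hneg _ (List.get_mem l _) _ (List.get_mem l _) (hchain i hi)
  have hwrap : ∀ e f, l.getLast? = some e → l.head? = some f → f.wt = -e.wt :=
    fun e f he hf => hneg e (List.mem_of_getLast? he) f (List.mem_of_head? hf) (hclose e f he hf)
  have hwt : ∀ e ∈ l, e.wt ≠ 0 := fun e he => by
    rcases (hvalid e he).wt_eq_neg_one_or_one with h | h <;> rw [h] <;> norm_num
  exact ⟨⟨hne, hvalid, hchain, hclose, hnodup⟩, even_length_of_altWt halt hwrap hwt, halt,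
    hwrap⟩

open CHAInstance in
/-- for two popular matchings `M`, `M'` of a CHA instance, every directed
cycle contained in the set `S` of edges of `G_M` reversed in `G_{M'}` is a switching
cycle of `G_M`, i.e. an even-length directed cycle with alternating `+1`/`-1`
weights. -/
theorem dirCycle_in_reversedEdges_isSwitchingCycle
    {A H : Type*} [Fintype A] [Fintype H] (I : CHAInstance A H)
    (M M' : Set (A × H)) (hM : IsPopular I M) (hM' : IsPopular I M')
    (l : List (DirEdge A H)) (hl : IsDirCycle I M l)
    (hsub : ∀ e ∈ l, e ∈ ReversedEdges I M M') :
    IsSwitchingCycle I M l :=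
  dirCycle_in_reversedEdges_isSwitchingCycle_general I M M' hM hM' l hl hsub
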